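/- arXiv:1901.09801 — 4 statements merged into one kernel-verified Lean document; each statement's English description precedes it below -/
import Mathlib

section
/- The automorphism group of G acts transitively on the edges of G: for any two edges {x,y} and {u,v} of G, there exists a graph automorphism θ of G with θ({x,y}) = {u,v}. -/
open SimpleGraph

/-- The set of nonzero cubes in a field. -/
def cubes (F : Type) [Field F] : Set F := {s | ∃ x : F, x ≠ 0 ∧ x ^ 3 = s}

/-- The Cayley graph on `F` with connection set the nonzero cubes:
`x ~ y` iff `x - y` is a nonzero cube. -/
def cayley (F : Type) [Field F] : SimpleGraph F :=
  SimpleGraph.fromRel (fun x y => x - y ∈ cubes F)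

/-- `v : Fin n → V` is an induced path on `n` vertices in `G`. -/
def IsInducedPath {V : Type} (G : SimpleGraph V) {n : ℕ} (v : Fin n → V) : Prop :=
  Function.Injective v ∧
    ∀ i j : Fin n, G.Adj (v i) (v j) ↔ (i.val + 1 = j.val ∨ j.val + 1 = i.val)

/-!
For every field `F`, the maps `z ↦ c * z + d` with `c` a nonzero cube are automorphisms of
`cayley F`, since they multiply differences by the cube `c`. Given edges `{x, y}` and `{u, v}`,
the quotient `(u - v) / (x - y)` is a cube, and the affine map with this slope sending `x` to `u`
sends `y` to `v`.
-/

section Cubes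

variable {F : Type} [Field F]

lemma ne_zero_of_mem_cubes {a : F} (ha : a ∈ cubes F) : a ≠ 0 := by
  obtain ⟨p, hp, rfl⟩ := ha
  exact pow_ne_zero _ hp

lemma mul_mem_cubes {a b : F} (ha : a ∈ cubes F) (hb : b ∈ cubes F) : a * b ∈ cubes F := by
  obtain ⟨p, hp, rfl⟩ := ha
  obtain ⟨q, hq, rfl⟩ := hb
  exact ⟨p * q, mul_ne_zero hp hq, mul_pow p q 3⟩

lemma inv_mem_cubes {a : F} (ha : a ∈ cubes F) : a⁻¹ ∈ cubes F := by
  obtain ⟨p, hp, rfl⟩ := ha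
  exact ⟨p⁻¹, inv_ne_zero hp, inv_pow p 3⟩

lemma neg_one_mem_cubes : (-1 : F) ∈ cubes F :=
  ⟨-1, neg_ne_zero.mpr one_ne_zero, by norm_num⟩

lemma mul_mem_cubes_iff {c : F} (hc : c ∈ cubes F) {a : F} : c * a ∈ cubes F ↔ a ∈ cubes F := by
  refine ⟨fun h => ?_, mul_mem_cubes hc⟩
  simpa [ne_zero_of_mem_cubes hc] using mul_mem_cubes (inv_mem_cubes hc) h

lemma neg_mem_cubes_iff {a : F} : -a ∈ cubes F ↔ a ∈ cubes F := by
  simpa using mul_mem_cubes_iff (neg_one_mem_cubes (F := F)) (a := a)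

lemma cayley_adj_iff {a b : F} : (cayley F).Adj a b ↔ a ≠ b ∧ a - b ∈ cubes F := by
  rw [cayley, fromRel_adj, ← neg_sub a b, neg_mem_cubes_iff, or_self]

end Cubes

def cayleyAffineIso {F : Type} [Field F] {c : F} (hc : c ∈ cubes F) (d : F) :
    cayley F ≃g cayley F where
  toEquiv := (Equiv.mulLeft₀ c (ne_zero_of_mem_cubes hc)).trans (Equiv.addRight d)
  map_rel_iff' {a b} := by
    have hdiff : c * a + d - (c * b + d) = c * (a - b) := by ring
    simp only [Equiv.trans_apply, Equiv.mulLeft₀_apply, Equiv.coe_addRight, cayley_adj_iff, ne_eq,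
      add_left_inj, mul_right_inj' (ne_zero_of_mem_cubes hc), hdiff, mul_mem_cubes_iff hc]

lemma cayleyAffineIso_apply {F : Type} [Field F] {c : F} (hc : c ∈ cubes F) (d z : F) :
    cayleyAffineIso hc d z = c * z + d := rfl

theorem stmt5_general (F : Type) [Field F]
    (x y u v : F) (hxy : (cayley F).Adj x y) (huv : (cayley F).Adj u v) :
    ∃ θ : cayley F ≃g cayley F, (θ x = u ∧ θ y = v) ∨ (θ x = v ∧ θ y = u) := by
  obtain ⟨hxy_ne, hxy_cube⟩ := cayley_adj_iff.mp hxy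
  obtain ⟨-, huv_cube⟩ := cayley_adj_iff.mp huv
  have hxy_sub : x - y ≠ 0 := sub_ne_zero.mpr hxy_ne
  set c := (u - v) * (x - y)⁻¹ with hc_def
  have hc : c ∈ cubes F := mul_mem_cubes huv_cube (inv_mem_cubes hxy_cube)
  refine ⟨cayleyAffineIso hc (u - c * x), Or.inl ⟨?_, ?_⟩⟩
  · rw [cayleyAffineIso_apply]
    ring
  · have hcxy : c * (x - y) = u - v := by rw [hc_def, inv_mul_cancel_right₀ hxy_sub]
    rw [cayleyAffineIso_apply]
    linear_combination -hcxy

theorem stmt5 (F : Type) [Field F] [Fintype F] (hF : Fintype.card F = 16)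
    (x y u v : F) (hxy : (cayley F).Adj x y) (huv : (cayley F).Adj u v) :
    ∃ θ : cayley F ≃g cayley F, (θ x = u ∧ θ y = v) ∨ (θ x = v ∧ θ y = u) :=
  stmt5_general F x y u v hxy huv
end

section
/- The graph G on F_16 (x ~ y iff x - y is a nonzero cube) contains no induced path on 6 vertices. -/
open SimpleGraph

def inS (n : ℕ) : Bool := n == 1 || n == 2 || n == 4 || n == 8 || n == 15

set_option maxRecDepth 100000 in
set_option maxHeartbeats 4000000 in
lemma searchP6 : ¬ ∃ b : Fin 16, inS b.val = true ∧ ∃ c : Fin 16, inS (b.val^^^c.val) = true ∧ inS c.val = false ∧ c.val ≠ 0 ∧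
    ∃ d : Fin 16, inS (c.val^^^d.val) = true ∧ inS d.val = false ∧ inS (b.val^^^d.val) = false ∧ d.val ≠ 0 ∧ d.val ≠ b.val ∧
    ∃ e : Fin 16, inS (d.val^^^e.val) = true ∧ inS e.val = false ∧ inS (b.val^^^e.val) = false ∧ inS (c.val^^^e.val) = false ∧ e.val ≠ 0 ∧ e.val ≠ b.val ∧ e.val ≠ c.val ∧
    ∃ f : Fin 16, inS (e.val^^^f.val) = true ∧ inS f.val = false ∧ inS (b.val^^^f.val) = false ∧ inS (c.val^^^f.val) = false ∧ inS (d.val^^^f.val) = false ∧ f.val ≠ 0 ∧ f.val ≠ b.val ∧ f.val ≠ c.val ∧ f.val ≠ d.val := by decide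

lemma xor_lt16 : ∀ i j : Fin 16, i.val ^^^ j.val < 16 := by decide

def eF {F : Type} [Field F] (z : F) (n : ℕ) : F :=
  (if n.testBit 0 then 1 else 0) + (if n.testBit 1 then 1 else 0) * z
  + (if n.testBit 2 then 1 else 0) * z^2 + (if n.testBit 3 then 1 else 0) * z^3

lemma if_add {F : Type} [Field F] (h2 : (2:F) = 0) (a b : Bool) :
    ((if a then (1:F) else 0) + if b then 1 else 0) = if (a ^^ b) then 1 else 0 := by
  cases a <;> cases b <;> simp <;> linear_combination h2

lemma eF_add {F : Type} [Field F] (z : F) (h2 : (2:F) = 0) (m n : ℕ) :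
    eF z m + eF z n = eF z (m ^^^ n) := by
  simp only [eF, Nat.testBit_xor, ← if_add h2]
  ring

lemma eF_ne {F : Type} [Field F] (z : F) (h2 : (2:F) = 0)
    (hq : z^4 + z^3 + z^2 + z + 1 = 0) :
    ∀ n : ℕ, n < 16 → n ≠ 0 → eF z n ≠ 0 := by
  intro n hlt hne h
  interval_cases n
  · exact hne rfl
  · have hev : eF z 1 = 1 := by simp [eF, Nat.testBit]
    rw [hev] at h
    exact one_ne_zero (α := F) (by linear_combination ((1:F)) * h)
  · have hev : eF z 2 = z := by simp [eF, Nat.testBit]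
    rw [hev] at h
    exact one_ne_zero (α := F) (by linear_combination ((1:F) + z + z^2 + z^3) * h + ((1:F)) * hq + ((-1:F) * z + (-1:F) * z^2 + (-1:F) * z^3 + (-1:F) * z^4) * h2)
  · have hev : eF z 3 = 1 + z := by simp [eF, Nat.testBit]
    rw [hev] at h
    exact one_ne_zero (α := F) (by linear_combination (z + z^3) * h + ((1:F)) * hq + ((-1:F) * z + (-1:F) * z^2 + (-1:F) * z^3 + (-1:F) * z^4) * h2)
  · have hev : eF z 4 = z^2 := by simp [eF, Nat.testBit]
    rw [hev] at h
    exact one_ne_zero (α := F) (by linear_combination (z^3) * h + ((1:F) + z) * hq + ((-1:F) * z + (-1:F) * z^2 + (-1:F) * z^3 + (-1:F) * z^4 + (-1:F) * z^5) * h2)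
  · have hev : eF z 5 = 1 + z^2 := by simp [eF, Nat.testBit]
    rw [hev] at h
    exact one_ne_zero (α := F) (by linear_combination (z + z^2) * h + ((1:F)) * hq + ((-1:F) * z + (-1:F) * z^2 + (-1:F) * z^3 + (-1:F) * z^4) * h2)
  · have hev : eF z 6 = z + z^2 := by simp [eF, Nat.testBit]
    rw [hev] at h
    exact one_ne_zero (α := F) (by linear_combination ((1:F) + z^2) * h + ((1:F)) * hq + ((-1:F) * z + (-1:F) * z^2 + (-1:F) * z^3 + (-1:F) * z^4) * h2)
  · have hev : eF z 7 = 1 + z + z^2 := by simp [eF, Nat.testBit]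
    rw [hev] at h
    exact one_ne_zero (α := F) (by linear_combination ((1:F) + z^3) * h + (z) * hq + ((-1:F) * z + (-1:F) * z^2 + (-1:F) * z^3 + (-1:F) * z^4 + (-1:F) * z^5) * h2)
  · have hev : eF z 8 = z^3 := by simp [eF, Nat.testBit]
    rw [hev] at h
    exact one_ne_zero (α := F) (by linear_combination (z^2) * h + ((1:F) + z) * hq + ((-1:F) * z + (-1:F) * z^2 + (-1:F) * z^3 + (-1:F) * z^4 + (-1:F) * z^5) * h2)
  · have hev : eF z 9 = 1 + z^3 := by simp [eF, Nat.testBit]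
    rw [hev] at h
    exact one_ne_zero (α := F) (by linear_combination ((1:F) + z + z^2) * h + (z) * hq + ((-1:F) * z + (-1:F) * z^2 + (-1:F) * z^3 + (-1:F) * z^4 + (-1:F) * z^5) * h2)
  · have hev : eF z 10 = z + z^3 := by simp [eF, Nat.testBit]
    rw [hev] at h
    exact one_ne_zero (α := F) (by linear_combination ((1:F) + z) * h + ((1:F)) * hq + ((-1:F) * z + (-1:F) * z^2 + (-1:F) * z^3 + (-1:F) * z^4) * h2)
  · have hev : eF z 11 = 1 + z + z^3 := by simp [eF, Nat.testBit]
    rw [hev] at h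
    exact one_ne_zero (α := F) (by linear_combination (z + z^2 + z^3) * h + ((1:F) + z^2) * hq + ((-1:F) * z + (-2:F) * z^2 + (-2:F) * z^3 + (-2:F) * z^4 + (-1:F) * z^5 + (-1:F) * z^6) * h2)
  · have hev : eF z 12 = z^2 + z^3 := by simp [eF, Nat.testBit]
    rw [hev] at h
    exact one_ne_zero (α := F) (by linear_combination ((1:F) + z^2 + z^3) * h + ((1:F) + z + z^2) * hq + ((-1:F) * z + (-2:F) * z^2 + (-2:F) * z^3 + (-2:F) * z^4 + (-2:F) * z^5 + (-1:F) * z^6) * h2)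
  · have hev : eF z 13 = 1 + z^2 + z^3 := by simp [eF, Nat.testBit]
    rw [hev] at h
    exact one_ne_zero (α := F) (by linear_combination (z^2 + z^3) * h + ((1:F) + z + z^2) * hq + ((-1:F) * z + (-2:F) * z^2 + (-2:F) * z^3 + (-2:F) * z^4 + (-2:F) * z^5 + (-1:F) * z^6) * h2)
  · have hev : eF z 14 = z + z^2 + z^3 := by simp [eF, Nat.testBit]
    rw [hev] at h
    exact one_ne_zero (α := F) (by linear_combination ((1:F) + z + z^3) * h + ((1:F) + z^2) * hq + ((-1:F) * z + (-2:F) * z^2 + (-2:F) * z^3 + (-2:F) * z^4 + (-1:F) * z^5 + (-1:F) * z^6) * h2)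
  · have hev : eF z 15 = 1 + z + z^2 + z^3 := by simp [eF, Nat.testBit]
    rw [hev] at h
    exact one_ne_zero (α := F) (by linear_combination (z) * h + ((1:F)) * hq + ((-1:F) * z + (-1:F) * z^2 + (-1:F) * z^3 + (-1:F) * z^4) * h2)

lemma eF_fifth {F : Type} [Field F] (z : F) (h2 : (2:F) = 0)
    (hq : z^4 + z^3 + z^2 + z + 1 = 0) :
    ∀ n : ℕ, n < 16 → ((eF z n)^5 = 1 ↔ inS n = true) := by
  intro n hlt
  interval_cases n
  · simp [eF, Nat.testBit, inS]
  · refine iff_of_true ?_ rfl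
    have hev : eF z 1 = 1 := by simp [eF, Nat.testBit]
    rw [hev]
    norm_num
  · refine iff_of_true ?_ rfl
    have hev : eF z 2 = z := by simp [eF, Nat.testBit]
    rw [hev]
    linear_combination ((-1:F) + z) * hq
  · refine iff_of_false ?_ (by decide)
    have hev : eF z 3 = 1 + z := by simp [eF, Nat.testBit]
    have hevm : eF z 12 = z^2 + z^3 := by simp [eF, Nat.testBit]
    intro h
    rw [hev] at h
    have hm0 : eF z 12 = 0 := by rw [hevm]; linear_combination ((1:F)) * h + ((-4:F) + (-1:F) * z) * hq + ((2:F) + (-2:F) * z^2 + (-2:F) * z^3) * h2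
    exact eF_ne z h2 hq 12 (by norm_num) (by norm_num) hm0
  · refine iff_of_true ?_ rfl
    have hev : eF z 4 = z^2 := by simp [eF, Nat.testBit]
    rw [hev]
    linear_combination ((-1:F) + z + (-1:F) * z^5 + z^6) * hq
  · refine iff_of_false ?_ (by decide)
    have hev : eF z 5 = 1 + z^2 := by simp [eF, Nat.testBit]
    have hevm : eF z 13 = 1 + z^2 + z^3 := by simp [eF, Nat.testBit]
    intro h
    rw [hev] at h
    have hm0 : eF z 13 = 0 := by rw [hevm]; linear_combination ((1:F)) * h + ((-9:F) + (9:F) * z + (-10:F) * z^2 + (5:F) * z^3 + (-5:F) * z^4 + z^5 + (-1:F) * z^6) * hq + ((5:F) + (3:F) * z^2 + (3:F) * z^3) * h2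
    exact eF_ne z h2 hq 13 (by norm_num) (by norm_num) hm0
  · refine iff_of_false ?_ (by decide)
    have hev : eF z 6 = z + z^2 := by simp [eF, Nat.testBit]
    have hevm : eF z 12 = z^2 + z^3 := by simp [eF, Nat.testBit]
    intro h
    rw [hev] at h
    have hm0 : eF z 12 = 0 := by rw [hevm]; linear_combination ((1:F)) * h + ((-3:F) + (3:F) * z + (5:F) * z^2 + (-5:F) * z^4 + (-4:F) * z^5 + (-1:F) * z^6) * hq + ((2:F) + (-2:F) * z^2 + (-2:F) * z^3) * h2
    exact eF_ne z h2 hq 12 (by norm_num) (by norm_num) hm0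
  · refine iff_of_false ?_ (by decide)
    have hev : eF z 7 = 1 + z + z^2 := by simp [eF, Nat.testBit]
    have hevm : eF z 12 = z^2 + z^3 := by simp [eF, Nat.testBit]
    intro h
    rw [hev] at h
    have hm0 : eF z 12 = 0 := by rw [hevm]; linear_combination ((1:F)) * h + ((2:F) + (-7:F) * z + (-15:F) * z^2 + (-15:F) * z^3 + (-10:F) * z^4 + (-4:F) * z^5 + (-1:F) * z^6) * hq + ((-1:F) + (3:F) * z^2 + (3:F) * z^3) * h2
    exact eF_ne z h2 hq 12 (by norm_num) (by norm_num) hm0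
  · refine iff_of_true ?_ rfl
    have hev : eF z 8 = z^3 := by simp [eF, Nat.testBit]
    rw [hev]
    linear_combination ((-1:F) + z + (-1:F) * z^5 + z^6 + (-1:F) * z^10 + z^11) * hq
  · refine iff_of_false ?_ (by decide)
    have hev : eF z 9 = 1 + z^3 := by simp [eF, Nat.testBit]
    have hevm : eF z 13 = 1 + z^2 + z^3 := by simp [eF, Nat.testBit]
    intro h
    rw [hev] at h
    have hm0 : eF z 13 = 0 := by rw [hevm]; linear_combination ((1:F)) * h + ((-9:F) + (9:F) * z + (-5:F) * z^2 + (-5:F) * z^3 + (10:F) * z^4 + (-9:F) * z^5 + (-1:F) * z^6 + (5:F) * z^7 + (-5:F) * z^8 + z^10 + (-1:F) * z^11) * hq + ((5:F) + (3:F) * z^2 + (3:F) * z^3) * h2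
    exact eF_ne z h2 hq 13 (by norm_num) (by norm_num) hm0
  · refine iff_of_false ?_ (by decide)
    have hev : eF z 10 = z + z^3 := by simp [eF, Nat.testBit]
    have hevm : eF z 13 = 1 + z^2 + z^3 := by simp [eF, Nat.testBit]
    intro h
    rw [hev] at h
    have hm0 : eF z 13 = 0 := by rw [hevm]; linear_combination ((1:F)) * h + ((-8:F) + (8:F) * z + (-5:F) * z^2 + (5:F) * z^4 + (-9:F) * z^5 + (9:F) * z^6 + (-10:F) * z^7 + (5:F) * z^8 + (-5:F) * z^9 + z^10 + (-1:F) * z^11) * hq + ((5:F) + (3:F) * z^2 + (3:F) * z^3) * h2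
    exact eF_ne z h2 hq 13 (by norm_num) (by norm_num) hm0
  · refine iff_of_false ?_ (by decide)
    have hev : eF z 11 = 1 + z + z^3 := by simp [eF, Nat.testBit]
    have hevm : eF z 13 = 1 + z^2 + z^3 := by simp [eF, Nat.testBit]
    intro h
    rw [hev] at h
    have hm0 : eF z 13 = 0 := by rw [hevm]; linear_combination ((1:F)) * h + ((7:F) + (-12:F) * z + (-5:F) * z^3 + (-15:F) * z^4 + z^5 + (-11:F) * z^6 + (-5:F) * z^7 + (-5:F) * z^9 + z^10 + (-1:F) * z^11) * hq + ((-3:F) + (-2:F) * z^2 + (-2:F) * z^3) * h2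
    exact eF_ne z h2 hq 13 (by norm_num) (by norm_num) hm0
  · refine iff_of_false ?_ (by decide)
    have hev : eF z 12 = z^2 + z^3 := by simp [eF, Nat.testBit]
    have hevm : eF z 12 = z^2 + z^3 := by simp [eF, Nat.testBit]
    intro h
    rw [hev] at h
    have hm0 : eF z 12 = 0 := by rw [hevm]; linear_combination ((1:F)) * h + ((-3:F) + (3:F) * z + (5:F) * z^2 + (-5:F) * z^4 + (-3:F) * z^5 + (3:F) * z^6 + (5:F) * z^7 + (-5:F) * z^9 + (-4:F) * z^10 + (-1:F) * z^11) * hq + ((2:F) + (-2:F) * z^2 + (-2:F) * z^3) * h2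
    exact eF_ne z h2 hq 12 (by norm_num) (by norm_num) hm0
  · refine iff_of_false ?_ (by decide)
    have hev : eF z 13 = 1 + z^2 + z^3 := by simp [eF, Nat.testBit]
    have hevm : eF z 13 = 1 + z^2 + z^3 := by simp [eF, Nat.testBit]
    intro h
    rw [hev] at h
    have hm0 : eF z 13 = 0 := by rw [hevm]; linear_combination ((1:F)) * h + ((7:F) + (-7:F) * z + (-10:F) * z^4 + (-3:F) * z^5 + (-7:F) * z^6 + (-10:F) * z^7 + (-5:F) * z^8 + (-5:F) * z^9 + (-4:F) * z^10 + (-1:F) * z^11) * hq + ((-3:F) + (-2:F) * z^2 + (-2:F) * z^3) * h2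
    exact eF_ne z h2 hq 13 (by norm_num) (by norm_num) hm0
  · refine iff_of_false ?_ (by decide)
    have hev : eF z 14 = z + z^2 + z^3 := by simp [eF, Nat.testBit]
    have hevm : eF z 12 = z^2 + z^3 := by simp [eF, Nat.testBit]
    intro h
    rw [hev] at h
    have hm0 : eF z 12 = 0 := by rw [hevm]; linear_combination ((1:F)) * h + ((3:F) + (-3:F) * z + (-5:F) * z^2 + (5:F) * z^4 + (2:F) * z^5 + (-7:F) * z^6 + (-15:F) * z^7 + (-15:F) * z^8 + (-10:F) * z^9 + (-4:F) * z^10 + (-1:F) * z^11) * hq + ((-1:F) + (3:F) * z^2 + (3:F) * z^3) * h2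
    exact eF_ne z h2 hq 12 (by norm_num) (by norm_num) hm0
  · refine iff_of_true ?_ rfl
    have hev : eF z 15 = 1 + z + z^2 + z^3 := by simp [eF, Nat.testBit]
    rw [hev]
    linear_combination ((2:F) + (3:F) * z + (10:F) * z^2 + (20:F) * z^3 + (30:F) * z^4 + (38:F) * z^5 + (37:F) * z^6 + (30:F) * z^7 + (20:F) * z^8 + (10:F) * z^9 + (4:F) * z^10 + z^11) * hq + ((-1:F)) * h2

theorem stmt8 (F : Type) [Field F] [Fintype F] (hF : Fintype.card F = 16) :
    ¬ ∃ v : Fin 6 → F, IsInducedPath (cayley F) v := by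
  classical
  rintro ⟨v, hinj, hadjp⟩
  -- characteristic 2
  have h16 : (16 : F) = 0 := by
    have h := FiniteField.cast_card_eq_zero F
    rw [hF] at h
    exact_mod_cast h
  have h2 : (2 : F) = 0 := by
    have h4 : (2 : F) ^ 4 = 0 := by linear_combination h16
    exact (pow_eq_zero_iff (by norm_num)).mp h4
  -- a fifth root of unity
  obtain ⟨g, hg⟩ := IsCyclic.exists_generator (α := Fˣ)
  have hcard : Fintype.card Fˣ = 15 := by rw [Fintype.card_units, hF]
  have horder : orderOf g = 15 := by
    rw [orderOf_eq_card_of_forall_mem_zpowers hg, Nat.card_eq_fintype_card, hcard]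
  set z : F := ((g ^ 3 : Fˣ) : F) with hz
  have hz5 : z ^ 5 = 1 := by
    have hu : (g ^ 3) ^ 5 = (1 : Fˣ) := by
      rw [← pow_mul]
      exact orderOf_dvd_iff_pow_eq_one.mp (by rw [horder])
    rw [hz, ← Units.val_pow_eq_pow_val, hu]
    rfl
  have hz1 : z ≠ 1 := by
    intro hzeq
    have hu1 : (g ^ 3 : Fˣ) = 1 := Units.ext (by rw [Units.val_one, ← hz]; exact hzeq)
    have hdvd := orderOf_dvd_of_pow_eq_one hu1
    rw [horder] at hdvd
    norm_num at hdvd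
  have hq : z ^ 4 + z ^ 3 + z ^ 2 + z + 1 = 0 := by
    have hfac : (z - 1) * (z ^ 4 + z ^ 3 + z ^ 2 + z + 1) = 0 := by
      linear_combination hz5
    rcases mul_eq_zero.mp hfac with h | h
    · exact absurd (by linear_combination h) hz1
    · exact h
  -- cubes are the fifth roots of unity
  have cubes_iff : ∀ s : F, s ∈ cubes F ↔ s ^ 5 = 1 := by
    intro s
    constructor
    · rintro ⟨x, hx, rfl⟩
      have h15 := FiniteField.pow_card_sub_one_eq_one x hx
      rw [hF] at h15
      norm_num at h15
      calc (x ^ 3) ^ 5 = x ^ 15 := by ring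
        _ = 1 := h15
    · intro h5
      have hs0 : s ≠ 0 := by
        intro h0
        rw [h0] at h5
        norm_num at h5
      exact ⟨s ^ 2, pow_ne_zero 2 hs0, by linear_combination s * h5⟩
  have hadj5 : ∀ x y : F, (cayley F).Adj x y ↔ (x ≠ y ∧ (x - y) ^ 5 = 1) := by
    intro x y
    have hsym : y - x = x - y := by linear_combination (y - x) * h2
    rw [cayley, SimpleGraph.fromRel_adj, hsym, cubes_iff, or_self]
  -- the sixteen elements
  have headd := eF_add z h2
  have hne := eF_ne z h2 hq
  have hfifth := eF_fifth z h2 hq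
  have he0 : eF z 0 = 0 := by simp [eF, Nat.testBit]
  have hinj16 : ∀ i j : Fin 16, eF z i.val = eF z j.val → i = j := by
    intro i j hij
    by_contra hij'
    have hxne : i.val ^^^ j.val ≠ 0 := by
      rw [Ne, (show i.val ^^^ j.val = 0 ↔ i.val = j.val from ⟨fun h => by simpa [Nat.xor_assoc] using congrArg (· ^^^ j.val) h, fun h => by rw [h, Nat.xor_self]⟩)]
      exact fun h => hij' (Fin.ext h)
    have hzero : eF z (i.val ^^^ j.val) = 0 := by
      rw [← headd, hij]
      linear_combination (eF z j.val) * h2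
    exact hne _ (xor_lt16 i j) hxne hzero
  have hbij : Function.Bijective (fun i : Fin 16 => eF z i.val) := by
    rw [Fintype.bijective_iff_injective_and_card]
    exact ⟨fun i j h => hinj16 i j h, by simp [hF]⟩
  have hsurj : ∀ w : F, ∃ a : Fin 16, eF z a.val = w := fun w => hbij.2 w
  choose k hk using fun i : Fin 6 => hsurj (v i - v 0)
  have hk0 : k 0 = 0 := by
    apply hinj16
    rw [hk 0, sub_self]
    simpa using he0.symm
  have hksub : ∀ i j : Fin 6, v i - v j = eF z ((k i).val ^^^ (k j).val) := by
    intro i j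
    rw [← headd, hk i, hk j]
    linear_combination (v 0 - v j) * h2
  have hkinj : ∀ i j : Fin 6, i ≠ j → k i ≠ k j := by
    intro i j hij hkeq
    apply hij
    apply hinj
    have h1 : v i - v 0 = v j - v 0 := by rw [← hk i, ← hk j, hkeq]
    linear_combination h1
  -- adjacency transfer
  have hAdj : ∀ i j : Fin 6, (cayley F).Adj (v i) (v j) ↔
      (k i ≠ k j ∧ inS ((k i).val ^^^ (k j).val) = true) := by
    intro i j
    rw [hadj5, hksub i j, ← hfifth _ (xor_lt16 (k i) (k j))]
    have hvk : v i ≠ v j ↔ k i ≠ k j := by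
      constructor
      · intro hv hkeq
        apply hv
        have h1 : v i - v 0 = v j - v 0 := by rw [← hk i, ← hk j, hkeq]
        linear_combination h1
      · intro hkne hveq
        exact hkne (hinj16 _ _ (by rw [hk i, hk j, hveq]))
    exact and_congr hvk Iff.rfl
  -- consecutive adjacency facts
  have hA : ∀ i j : Fin 6, (i.val + 1 = j.val ∨ j.val + 1 = i.val) →
      inS ((k i).val ^^^ (k j).val) = true :=
    fun i j h => ((hAdj i j).mp ((hadjp i j).mpr h)).2
  have hN : ∀ i j : Fin 6, ¬(i.val + 1 = j.val ∨ j.val + 1 = i.val) → i ≠ j →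
      inS ((k i).val ^^^ (k j).val) = false := by
    intro i j hcond hij
    cases hb : inS ((k i).val ^^^ (k j).val)
    · rfl
    · exact absurd ((hadjp i j).mp ((hAdj i j).mpr ⟨hkinj i j hij, hb⟩)) hcond
  have hkv : ∀ i : Fin 6, i ≠ 0 → (k i).val ≠ 0 := by
    intro i hi h0
    exact hkinj i 0 hi (by rw [hk0]; exact Fin.ext h0)
  have hkne' : ∀ i j : Fin 6, i ≠ j → (k i).val ≠ (k j).val :=
    fun i j hij h => hkinj i j hij (Fin.ext h)
  have hz01 : ∀ j : Fin 6, inS ((k 0).val ^^^ (k j).val) = inS ((k j).val) := by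
    intro j
    rw [hk0]
    simp
  -- feed the finite search
  apply searchP6
  refine ⟨k 1, ?_, k 2, ?_, ?_, hkv 2 (by decide), k 3, ?_, ?_, ?_, hkv 3 (by decide),
    hkne' 3 1 (by decide), k 4, ?_, ?_, ?_, ?_, hkv 4 (by decide), hkne' 4 1 (by decide),
    hkne' 4 2 (by decide), k 5, ?_, ?_, ?_, ?_, ?_, hkv 5 (by decide),
    hkne' 5 1 (by decide), hkne' 5 2 (by decide), hkne' 5 3 (by decide)⟩
  · rw [← hz01 1]; exact hA 0 1 (by decide)
  · exact hA 1 2 (by decide)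
  · rw [← hz01 2]; exact hN 0 2 (by decide) (by decide)
  · exact hA 2 3 (by decide)
  · rw [← hz01 3]; exact hN 0 3 (by decide) (by decide)
  · exact hN 1 3 (by decide) (by decide)
  · exact hA 3 4 (by decide)
  · rw [← hz01 4]; exact hN 0 4 (by decide) (by decide)
  · exact hN 1 4 (by decide) (by decide)
  · exact hN 2 4 (by decide) (by decide)
  · exact hA 4 5 (by decide)
  · rw [← hz01 5]; exact hN 0 5 (by decide) (by decide)
  · exact hN 1 5 (by decide) (by decide)
  · exact hN 2 5 (by decide) (by decide)
  · exact hN 3 5 (by decide) (by decide)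
end

section
/- For every non-edge e of G, adding e to G creates an induced path on 6 vertices. -/
open SimpleGraph

/-!
All fields of order 16 are isomorphic, and a ring isomorphism followed by a translation is an
isomorphism of the cubic Cayley graphs sending any non-edge `{0, D}` to a given non-edge `{x, y}`.
So it suffices to exhibit, in one explicit model of `𝔽₁₆`, an induced path on six vertices through
each non-edge `{0, D}`; the kernel checks these ten paths by evaluation.
-/

section CayleyGraph

variable {K F : Type} [Field K] [Field F]

instance [Fintype F] [DecidableEq F] : DecidablePred (· ∈ cubes F) := fun s =>
  inferInstanceAs (Decidable (∃ x : F, x ≠ 0 ∧ x ^ 3 = s))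

instance [Fintype F] [DecidableEq F] : DecidableRel (cayley F).Adj :=
  inferInstanceAs (DecidableRel (fromRel fun x y : F => x - y ∈ cubes F).Adj)

theorem RingEquiv.map_mem_cubes_iff (φ : K ≃+* F) {d : K} : φ d ∈ cubes F ↔ d ∈ cubes K := by
  constructor
  · rintro ⟨u, hu, hud⟩
    exact ⟨φ.symm u, by simpa using hu, φ.injective (by simp [hud])⟩
  · rintro ⟨u, hu, rfl⟩
    exact ⟨φ u, by simpa using hu, (map_pow φ u 3).symm⟩

def RingEquiv.cayleyIso (φ : K ≃+* F) : cayley K ≃g cayley F where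
  toEquiv := φ.toEquiv
  map_rel_iff' := by
    simp [cayley, fromRel_adj, ← map_sub, φ.map_mem_cubes_iff]

def cayleyAddLeft (a : F) : cayley F ≃g cayley F where
  toEquiv := Equiv.addLeft a
  map_rel_iff' := by simp [cayley, fromRel_adj]

end CayleyGraph

section InducedPath

variable {V W : Type} {G : SimpleGraph V} {H : SimpleGraph W}

instance [DecidableEq V] [DecidableRel G.Adj] {n : ℕ} (v : Fin n → V) :
    Decidable (IsInducedPath G v) :=
  inferInstanceAs (Decidable (Function.Injective v ∧ ∀ i j : Fin n, G.Adj (v i) (v j) ↔ _))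

theorem IsInducedPath.map (f : G ↪g H) {n : ℕ} {v : Fin n → V} (hv : IsInducedPath G v) :
    IsInducedPath H (f ∘ v) :=
  ⟨f.injective.comp hv.1, fun i j => by simpa using hv.2 i j⟩

def SimpleGraph.Iso.supEdge (f : G ≃g H) (a b : V) :
    G ⊔ fromEdgeSet {s(a, b)} ≃g H ⊔ fromEdgeSet {s(f a, f b)} where
  toEquiv := f.toEquiv
  map_rel_iff' := by simp [f.map_adj_iff]

end InducedPath

/-- Bit `i` of `a : Fin 16` is the coefficient of `X ^ i` in `𝔽₂[X] ⧸ (X ^ 4 + X + 1)`. -/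
def GF16 : Type := Fin 16

namespace GF16

def xtime (a : ℕ) : ℕ := if a < 8 then 2 * a else (2 * a) ^^^ 0b10011

def mulNat (a b : ℕ) : ℕ :=
  let step (acc i : ℕ) : ℕ := xtime acc ^^^ if b.testBit i then a else 0
  step (step (step (step 0 3) 2) 1) 0

def ofNat (n : ℕ) : GF16 := Fin.ofNat 16 n

instance : DecidableEq GF16 := inferInstanceAs (DecidableEq (Fin 16))
instance : Fintype GF16 := inferInstanceAs (Fintype (Fin 16))

def add (a b : GF16) : GF16 := ofNat ((a : Fin 16).val ^^^ (b : Fin 16).val)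
def mul (a b : GF16) : GF16 := ofNat (mulNat (a : Fin 16).val (b : Fin 16).val)
-- `a⁻¹ = a ^ 14`, since `a ^ 15 = 1` for `a ≠ 0`.
def inv (a : GF16) : GF16 :=
  let a2 := mul a a; let a4 := mul a2 a2; mul (mul a4 a4) (mul a4 a2)

instance : Zero GF16 := ⟨ofNat 0⟩
instance : One GF16 := ⟨ofNat 1⟩
instance : Add GF16 := ⟨add⟩
instance : Mul GF16 := ⟨mul⟩
instance : Neg GF16 := ⟨id⟩
instance : Inv GF16 := ⟨inv⟩

instance : Field GF16 where
  add := add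
  add_assoc := by decide +kernel
  zero := ofNat 0
  zero_add := by decide +kernel
  add_zero := by decide +kernel
  add_comm := by decide +kernel
  nsmul := nsmulRec
  zsmul := zsmulRec
  mul := mul
  mul_assoc := by decide +kernel
  one := ofNat 1
  one_mul := by decide +kernel
  mul_one := by decide +kernel
  left_distrib := by decide +kernel
  right_distrib := by decide +kernel
  zero_mul := by decide +kernel
  mul_zero := by decide +kernel
  mul_comm := by decide +kernel
  neg := id
  neg_add_cancel := by decide +kernel
  inv := inv
  exists_pair_ne := ⟨ofNat 0, ofNat 1, by decide +kernel⟩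
  mul_inv_cancel := by decide +kernel
  inv_zero := by decide +kernel
  nnqsmul := _
  qsmul := _

-- Vertices are given by bit patterns: the field numeral `(2 : GF16)` is `0`.
def nonEdgePath (D : GF16) : Fin 6 → GF16 :=
  ofNat ∘ match (D : Fin 16).val with
  | 2 => ![0, 2, 3, 9, 5, 4]
  | 3 => ![0, 3, 2, 13, 5, 4]
  | 4 => ![0, 4, 5, 9, 3, 2]
  | 5 => ![0, 5, 4, 11, 3, 2]
  | 6 => ![0, 6, 7, 11, 3, 2]
  | 7 => ![0, 7, 6, 9, 3, 2]
  | 9 => ![0, 9, 3, 2, 13, 7]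
  | 11 => ![0, 11, 3, 2, 13, 5]
  | 13 => ![0, 13, 2, 3, 9, 6]
  | 14 => ![0, 14, 2, 3, 9, 5]
  | _ => 0

theorem isInducedPath_nonEdgePath :
    ∀ D : GF16, D ≠ 0 → ¬ (cayley GF16).Adj 0 D →
      IsInducedPath (cayley GF16 ⊔ fromEdgeSet {s(0, D)}) (nonEdgePath D) := by
  decide +kernel

end GF16

theorem stmt13 (F : Type) [Field F] [Fintype F] (hF : Fintype.card F = 16)
    (x y : F) (hxy : x ≠ y) (hne : ¬ (cayley F).Adj x y) :
    ∃ v : Fin 6 → F,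
      IsInducedPath (cayley F ⊔ SimpleGraph.fromEdgeSet {s(x, y)}) v := by
  let φ : GF16 ≃+* F := FiniteField.ringEquivOfCardEq (by rw [hF]; rfl)
  let ψ : cayley GF16 ≃g cayley F := φ.cayleyIso.trans (cayleyAddLeft x)
  set D := φ.symm (y - x)
  have hψ0 : ψ 0 = x := by simp [ψ, RingEquiv.cayleyIso, cayleyAddLeft]
  have hψD : ψ D = y := by simp [ψ, D, RingEquiv.cayleyIso, cayleyAddLeft]
  have hD0 : D ≠ 0 := fun h => hxy (by rw [← hψ0, ← hψD, h])
  have hD : ¬ (cayley GF16).Adj 0 D := by rwa [← ψ.map_adj_iff, hψ0, hψD]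
  rw [← hψ0, ← hψD]
  exact ⟨_, (GF16.isInducedPath_nonEdgePath D hD0 hD).map (ψ.supEdge 0 D).toEmbedding⟩
end

section
/- In the graph obtained from G by deleting the edge {0,1}, the vertices α+α²+α³, 1, 1+α³, α³, 0, α²+α³ form an induced path on 6 vertices (in this order). -/
open SimpleGraph

set_option maxHeartbeats 4000000 in
theorem stmt14 (F : Type) [Field F] [Fintype F] (hF : Fintype.card F = 16)
    (a : F) (ha : a ^ 4 + a + 1 = 0) :
    IsInducedPath ((cayley F).deleteEdges {s((0 : F), 1)})
      ![a + a ^ 2 + a ^ 3, 1, 1 + a ^ 3, a ^ 3, 0, a ^ 2 + a ^ 3] := by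
  have hp2 : ringChar F = 2 := by
    obtain ⟨n, hp, hcard⟩ := FiniteField.card F (ringChar F)
    rw [hF] at hcard
    have hdvd : ringChar F ∣ 2 ^ 4 := by
      rw [show (2:ℕ)^4 = 16 by norm_num, hcard]
      exact dvd_pow_self _ (by exact_mod_cast n.ne_zero)
    exact (Nat.prime_dvd_prime_iff_eq hp Nat.prime_two).mp (hp.dvd_of_dvd_pow hdvd)
  have h2 : (2 : F) = 0 := by
    have h := CharP.cast_eq_zero F (ringChar F)
    rw [hp2] at h
    exact_mod_cast h
  have hnc : ∀ d : F, d ^ 5 ≠ 1 → d ∉ cubes F := by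
    rintro d h5 ⟨x, hx0, hx3⟩
    apply h5
    have hx15 : x ^ 15 = 1 := by
      have h := FiniteField.pow_card_sub_one_eq_one x hx0
      rw [hF] at h
      exact h
    calc d ^ 5 = x ^ 15 := by rw [← hx3]; ring
    _ = 1 := hx15
  have hAdjIff : ∀ x y : F, ((cayley F).deleteEdges {s((0 : F), 1)}).Adj x y ↔
      ((x ≠ y ∧ (x - y ∈ cubes F ∨ y - x ∈ cubes F)) ∧ ¬ s(x, y) = s((0 : F), (1 : F))) := by
    intro x y
    rw [SimpleGraph.deleteEdges_adj]
    simp [cayley, SimpleGraph.fromRel_adj, Set.mem_singleton_iff]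
  have hne_0_1 : (a + a ^ 2 + a ^ 3) ≠ ((1 : F)) := by
    intro hq
    exact one_ne_zero (α := F) (by linear_combination (a ^ 3) * hq + (1 + a + a ^ 2) * ha + (-1 * a + -1 * a ^ 2 + -1 * a ^ 4 + -1 * a ^ 5 + -1 * a ^ 6) * h2)
  have hne_0_2 : (a + a ^ 2 + a ^ 3) ≠ (1 + a ^ 3) := by
    intro hq
    exact one_ne_zero (α := F) (by linear_combination (a + a ^ 2) * hq + (1) * ha + (-1 * a ^ 3 + -1 * a ^ 4) * h2)
  have hne_0_3 : (a + a ^ 2 + a ^ 3) ≠ (a ^ 3) := by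
    intro hq
    exact one_ne_zero (α := F) (by linear_combination (1 + a + a ^ 2) * hq + (1) * ha + (-1 * a + -1 * a ^ 2 + -1 * a ^ 3 + -1 * a ^ 4) * h2)
  have hne_0_4 : (a + a ^ 2 + a ^ 3) ≠ ((0 : F)) := by
    intro hq
    exact one_ne_zero (α := F) (by linear_combination (1 + a) * hq + (1) * ha + (-1 * a + -1 * a ^ 2 + -1 * a ^ 3 + -1 * a ^ 4) * h2)
  have hne_0_5 : (a + a ^ 2 + a ^ 3) ≠ (a ^ 2 + a ^ 3) := by
    intro hq
    exact one_ne_zero (α := F) (by linear_combination (1 + a ^ 3) * hq + (1) * ha + (-1 * a + -1 * a ^ 4) * h2)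
  have hne_1_2 : ((1 : F)) ≠ (1 + a ^ 3) := by
    intro hq
    exact one_ne_zero (α := F) (by linear_combination (1 + a + a ^ 2 + a ^ 3) * hq + (1 + a + a ^ 2) * ha + (-1 * a + -1 * a ^ 2) * h2)
  have hne_1_3 : ((1 : F)) ≠ (a ^ 3) := by
    intro hq
    exact one_ne_zero (α := F) (by linear_combination (a) * hq + (1) * ha + (-1 * a) * h2)
  have hne_1_4 : ((1 : F)) ≠ ((0 : F)) := by
    intro hq
    exact one_ne_zero (α := F) (by linear_combination (1) * hq)
  have hne_1_5 : ((1 : F)) ≠ (a ^ 2 + a ^ 3) := by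
    intro hq
    exact one_ne_zero (α := F) (by linear_combination (a ^ 2) * hq + (1 + a) * ha + (-1 * a + -1 * a ^ 2) * h2)
  have hne_2_3 : (1 + a ^ 3) ≠ (a ^ 3) := by
    intro hq
    exact one_ne_zero (α := F) (by linear_combination (1) * hq)
  have hne_2_4 : (1 + a ^ 3) ≠ ((0 : F)) := by
    intro hq
    exact one_ne_zero (α := F) (by linear_combination (a) * hq + (1) * ha + (-1 * a + -1 * a ^ 4) * h2)
  have hne_2_5 : (1 + a ^ 3) ≠ (a ^ 2 + a ^ 3) := by
    intro hq
    exact one_ne_zero (α := F) (by linear_combination (1 + a + a ^ 3) * hq + (a) * ha + (-1 * a) * h2)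
  have hne_3_4 : (a ^ 3) ≠ ((0 : F)) := by
    intro hq
    exact one_ne_zero (α := F) (by linear_combination (1 + a + a ^ 2 + a ^ 3) * hq + (1 + a + a ^ 2) * ha + (-1 * a + -1 * a ^ 2 + -1 * a ^ 3 + -1 * a ^ 4 + -1 * a ^ 5 + -1 * a ^ 6) * h2)
  have hne_3_5 : (a ^ 3) ≠ (a ^ 2 + a ^ 3) := by
    intro hq
    exact one_ne_zero (α := F) (by linear_combination (1 + a ^ 2 + a ^ 3) * hq + (1 + a) * ha + (-1 * a) * h2)
  have hne_4_5 : ((0 : F)) ≠ (a ^ 2 + a ^ 3) := by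
    intro hq
    exact one_ne_zero (α := F) (by linear_combination (a + a ^ 3) * hq + (1 + a + a ^ 2) * ha + (-1 * a + -1 * a ^ 2) * h2)
  have hc_0_1 : (a + a ^ 2 + a ^ 3) - ((1 : F)) ∈ cubes F :=
    ⟨1 + a, (by intro hq; exact one_ne_zero (α := F) (by linear_combination (a + a ^ 2 + a ^ 3) * hq + (1) * ha + (-1 * a + -1 * a ^ 2 + -1 * a ^ 3 + -1 * a ^ 4) * h2)), by linear_combination (1 + a + a ^ 2) * h2⟩
  have hc_1_2 : ((1 : F)) - (1 + a ^ 3) ∈ cubes F :=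
    ⟨a, (by intro hq; exact one_ne_zero (α := F) (by linear_combination (1 + a ^ 3) * hq + (1) * ha + (-1 * a + -1 * a ^ 4) * h2)), by linear_combination (a ^ 3) * h2⟩
  have hc_2_3 : (1 + a ^ 3) - (a ^ 3) ∈ cubes F :=
    ⟨1, one_ne_zero, by linear_combination (0 : F) * ha⟩
  have hc_3_4 : (a ^ 3) - ((0 : F)) ∈ cubes F :=
    ⟨a, (by intro hq; exact one_ne_zero (α := F) (by linear_combination (1 + a ^ 3) * hq + (1) * ha + (-1 * a + -1 * a ^ 4) * h2)), by linear_combination (0 : F) * ha⟩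
  have hc_4_5 : ((0 : F)) - (a ^ 2 + a ^ 3) ∈ cubes F :=
    ⟨a ^ 2, (by intro hq; exact one_ne_zero (α := F) (by linear_combination (1 + a ^ 2 + a ^ 3) * hq + (1 + a) * ha + (-1 * a + -1 * a ^ 2 + -1 * a ^ 4 + -1 * a ^ 5) * h2)), by linear_combination (a ^ 2) * ha⟩
  have h5_0_2 : ((a + a ^ 2 + a ^ 3) - (1 + a ^ 3)) ^ 5 ≠ 1 := by
    intro hq
    exact one_ne_zero (α := F) (by linear_combination (a + a ^ 2) * hq + (1 + a + a ^ 8) * ha + (-2 * a ^ 2 + 7 * a ^ 4 + -3 * a ^ 5 + -13 * a ^ 6 + 2 * a ^ 7 + 12 * a ^ 8 + 2 * a ^ 9 + -5 * a ^ 10 + -3 * a ^ 11 + -1 * a ^ 12) * h2)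
  have h5_2_0 : ((1 + a ^ 3) - (a + a ^ 2 + a ^ 3)) ^ 5 ≠ 1 := by
    intro hq
    exact one_ne_zero (α := F) (by linear_combination (a + a ^ 2) * hq + (1 + a + a ^ 8) * ha + (-1 * a + 2 * a ^ 2 + -8 * a ^ 4 + 2 * a ^ 5 + 13 * a ^ 6 + -2 * a ^ 7 + -13 * a ^ 8 + -3 * a ^ 9 + 5 * a ^ 10 + 3 * a ^ 11) * h2)
  have h5_0_3 : ((a + a ^ 2 + a ^ 3) - (a ^ 3)) ^ 5 ≠ 1 := by
    intro hq
    exact one_ne_zero (α := F) (by linear_combination (1 + a + a ^ 2) * hq + (a + a ^ 8) * ha + (1 + -1 * a ^ 5 + -3 * a ^ 6 + -8 * a ^ 7 + -13 * a ^ 8 + -13 * a ^ 9 + -8 * a ^ 10 + -3 * a ^ 11 + -1 * a ^ 12) * h2)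
  have h5_3_0 : ((a ^ 3) - (a + a ^ 2 + a ^ 3)) ^ 5 ≠ 1 := by
    intro hq
    exact one_ne_zero (α := F) (by linear_combination (1 + a + a ^ 2) * hq + (a + a ^ 8) * ha + (1 + 3 * a ^ 6 + 8 * a ^ 7 + 12 * a ^ 8 + 12 * a ^ 9 + 8 * a ^ 10 + 3 * a ^ 11) * h2)
  have h5_0_4 : ((a + a ^ 2 + a ^ 3) - ((0 : F))) ^ 5 ≠ 1 := by
    intro hq
    exact one_ne_zero (α := F) (by linear_combination (1 + a + a ^ 2) * hq + (a + a ^ 7 + a ^ 8 + a ^ 9 + a ^ 10 + a ^ 11 + a ^ 13) * ha + (1 + -1 * a ^ 5 + -3 * a ^ 6 + -11 * a ^ 7 + -26 * a ^ 8 + -46 * a ^ 9 + -64 * a ^ 10 + -72 * a ^ 11 + -64 * a ^ 12 + -46 * a ^ 13 + -26 * a ^ 14 + -11 * a ^ 15 + -3 * a ^ 16 + -1 * a ^ 17) * h2)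
  have h5_4_0 : (((0 : F)) - (a + a ^ 2 + a ^ 3)) ^ 5 ≠ 1 := by
    intro hq
    exact one_ne_zero (α := F) (by linear_combination (1 + a + a ^ 2) * hq + (a + a ^ 7 + a ^ 8 + a ^ 9 + a ^ 10 + a ^ 11 + a ^ 13) * ha + (1 + 3 * a ^ 6 + 10 * a ^ 7 + 24 * a ^ 8 + 44 * a ^ 9 + 62 * a ^ 10 + 69 * a ^ 11 + 62 * a ^ 12 + 44 * a ^ 13 + 24 * a ^ 14 + 10 * a ^ 15 + 3 * a ^ 16) * h2)
  have h5_0_5 : ((a + a ^ 2 + a ^ 3) - (a ^ 2 + a ^ 3)) ^ 5 ≠ 1 := by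
    intro hq
    exact one_ne_zero (α := F) (by linear_combination (a + a ^ 2) * hq + (1 + a ^ 2 + a ^ 3) * ha + (-1 * a ^ 3 + -1 * a ^ 4 + -1 * a ^ 6 + -1 * a ^ 7) * h2)
  have h5_5_0 : ((a ^ 2 + a ^ 3) - (a + a ^ 2 + a ^ 3)) ^ 5 ≠ 1 := by
    intro hq
    exact one_ne_zero (α := F) (by linear_combination (a + a ^ 2) * hq + (1 + a ^ 2 + a ^ 3) * ha + (-1 * a ^ 3 + -1 * a ^ 4) * h2)
  have h5_1_3 : (((1 : F)) - (a ^ 3)) ^ 5 ≠ 1 := by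
    intro hq
    exact one_ne_zero (α := F) (by linear_combination (1 + a + a ^ 2) * hq + (1 + a + a ^ 2 + a ^ 6 + a ^ 7 + a ^ 8 + a ^ 9 + a ^ 11 + a ^ 12 + a ^ 13) * ha + (-1 * a + -1 * a ^ 2 + 2 * a ^ 3 + 2 * a ^ 4 + 2 * a ^ 5 + -6 * a ^ 6 + -6 * a ^ 7 + -6 * a ^ 8 + 4 * a ^ 9 + 4 * a ^ 10 + 4 * a ^ 11 + -4 * a ^ 12 + -4 * a ^ 13 + -3 * a ^ 14) * h2)
  have h5_3_1 : ((a ^ 3) - ((1 : F))) ^ 5 ≠ 1 := by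
    intro hq
    exact one_ne_zero (α := F) (by linear_combination (1 + a + a ^ 2) * hq + (1 + a + a ^ 2 + a ^ 6 + a ^ 7 + a ^ 8 + a ^ 9 + a ^ 11 + a ^ 12 + a ^ 13) * ha + (1 + -3 * a ^ 3 + -3 * a ^ 4 + -3 * a ^ 5 + 4 * a ^ 6 + 4 * a ^ 7 + 4 * a ^ 8 + -6 * a ^ 9 + -6 * a ^ 10 + -6 * a ^ 11 + a ^ 12 + a ^ 13 + 2 * a ^ 14 + -1 * a ^ 15 + -1 * a ^ 16 + -1 * a ^ 17) * h2)
  have h5_1_5 : (((1 : F)) - (a ^ 2 + a ^ 3)) ^ 5 ≠ 1 := by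
    intro hq
    exact one_ne_zero (α := F) (by linear_combination (a + a ^ 2) * hq + (1 + a + a ^ 2 + a ^ 4 + a ^ 5 + a ^ 8 + a ^ 9 + a ^ 11 + a ^ 13) * ha + (-1 * a + -1 * a ^ 2 + 2 * a ^ 3 + 4 * a ^ 4 + -4 * a ^ 5 + -16 * a ^ 6 + -10 * a ^ 7 + 14 * a ^ 8 + 26 * a ^ 9 + 7 * a ^ 10 + -20 * a ^ 11 + -23 * a ^ 12 + -6 * a ^ 13 + 7 * a ^ 14 + 7 * a ^ 15 + 3 * a ^ 16) * h2)
  have h5_5_1 : ((a ^ 2 + a ^ 3) - ((1 : F))) ^ 5 ≠ 1 := by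
    intro hq
    exact one_ne_zero (α := F) (by linear_combination (a + a ^ 2) * hq + (1 + a + a ^ 2 + a ^ 4 + a ^ 5 + a ^ 8 + a ^ 9 + a ^ 11 + a ^ 13) * ha + (-3 * a ^ 3 + -6 * a ^ 4 + a ^ 5 + 14 * a ^ 6 + 10 * a ^ 7 + -16 * a ^ 8 + -29 * a ^ 9 + -8 * a ^ 10 + 19 * a ^ 11 + 21 * a ^ 12 + 4 * a ^ 13 + -8 * a ^ 14 + -8 * a ^ 15 + -3 * a ^ 16 + -1 * a ^ 17) * h2)
  have h5_2_4 : ((1 + a ^ 3) - ((0 : F))) ^ 5 ≠ 1 := by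
    intro hq
    exact one_ne_zero (α := F) (by linear_combination (1 + a + a ^ 2) * hq + (1 + a + a ^ 2 + a ^ 6 + a ^ 7 + a ^ 8 + a ^ 9 + a ^ 11 + a ^ 12 + a ^ 13) * ha + (-1 * a + -1 * a ^ 2 + -3 * a ^ 3 + -3 * a ^ 4 + -3 * a ^ 5 + -6 * a ^ 6 + -6 * a ^ 7 + -6 * a ^ 8 + -6 * a ^ 9 + -6 * a ^ 10 + -6 * a ^ 11 + -4 * a ^ 12 + -4 * a ^ 13 + -3 * a ^ 14 + -1 * a ^ 15 + -1 * a ^ 16 + -1 * a ^ 17) * h2)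
  have h5_4_2 : (((0 : F)) - (1 + a ^ 3)) ^ 5 ≠ 1 := by
    intro hq
    exact one_ne_zero (α := F) (by linear_combination (1 + a + a ^ 2) * hq + (1 + a + a ^ 2 + a ^ 6 + a ^ 7 + a ^ 8 + a ^ 9 + a ^ 11 + a ^ 12 + a ^ 13) * ha + (1 + 2 * a ^ 3 + 2 * a ^ 4 + 2 * a ^ 5 + 4 * a ^ 6 + 4 * a ^ 7 + 4 * a ^ 8 + 4 * a ^ 9 + 4 * a ^ 10 + 4 * a ^ 11 + a ^ 12 + a ^ 13 + 2 * a ^ 14) * h2)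
  have h5_2_5 : ((1 + a ^ 3) - (a ^ 2 + a ^ 3)) ^ 5 ≠ 1 := by
    intro hq
    exact one_ne_zero (α := F) (by linear_combination (1 + a + a ^ 2) * hq + (1 + a + a ^ 3 + a ^ 4 + a ^ 7 + a ^ 8) * ha + (-1 * a + 2 * a ^ 2 + 2 * a ^ 3 + -4 * a ^ 4 + -6 * a ^ 5 + 4 * a ^ 7 + a ^ 8 + -3 * a ^ 9 + -2 * a ^ 10) * h2)
  have h5_5_2 : ((a ^ 2 + a ^ 3) - (1 + a ^ 3)) ^ 5 ≠ 1 := by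
    intro hq
    exact one_ne_zero (α := F) (by linear_combination (1 + a + a ^ 2) * hq + (1 + a + a ^ 3 + a ^ 4 + a ^ 7 + a ^ 8) * ha + (1 + -2 * a ^ 2 + -3 * a ^ 3 + a ^ 4 + 4 * a ^ 5 + -6 * a ^ 7 + -4 * a ^ 8 + 2 * a ^ 9 + 2 * a ^ 10 + -1 * a ^ 11 + -1 * a ^ 12) * h2)
  have h5_3_5 : ((a ^ 3) - (a ^ 2 + a ^ 3)) ^ 5 ≠ 1 := by
    intro hq
    exact one_ne_zero (α := F) (by linear_combination (1 + a + a ^ 2) * hq + (a + a ^ 5 + a ^ 6 + a ^ 7 + a ^ 8) * ha + (1 + -1 * a ^ 5 + -1 * a ^ 6 + -1 * a ^ 7 + -1 * a ^ 8 + -1 * a ^ 9) * h2)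
  have h5_5_3 : ((a ^ 2 + a ^ 3) - (a ^ 3)) ^ 5 ≠ 1 := by
    intro hq
    exact one_ne_zero (α := F) (by linear_combination (1 + a + a ^ 2) * hq + (a + a ^ 5 + a ^ 6 + a ^ 7 + a ^ 8) * ha + (1 + -1 * a ^ 5 + -1 * a ^ 6 + -1 * a ^ 7 + -1 * a ^ 8 + -1 * a ^ 9 + -1 * a ^ 10 + -1 * a ^ 11 + -1 * a ^ 12) * h2)
  have hA_0_1 : ((cayley F).deleteEdges {s((0 : F), 1)}).Adj (a + a ^ 2 + a ^ 3) ((1 : F)) := by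
    rw [hAdjIff]
    refine ⟨⟨hne_0_1, Or.inl hc_0_1⟩, ?_⟩
    intro hq
    rw [Sym2.mk_eq_mk_iff (p := (_, _)) (q := (_, _))] at hq
    simp only [Prod.mk.injEq, Prod.swap_prod_mk] at hq
    rcases hq with hq | hq
    · exact absurd hq.1 hne_0_4
    · exact absurd hq.1 hne_0_1
  have hA_1_2 : ((cayley F).deleteEdges {s((0 : F), 1)}).Adj ((1 : F)) (1 + a ^ 3) := by
    rw [hAdjIff]
    refine ⟨⟨hne_1_2, Or.inl hc_1_2⟩, ?_⟩
    intro hq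
    rw [Sym2.mk_eq_mk_iff (p := (_, _)) (q := (_, _))] at hq
    simp only [Prod.mk.injEq, Prod.swap_prod_mk] at hq
    rcases hq with hq | hq
    · exact absurd hq.2 hne_1_2.symm
    · exact absurd hq.2 hne_2_4
  have hA_2_3 : ((cayley F).deleteEdges {s((0 : F), 1)}).Adj (1 + a ^ 3) (a ^ 3) := by
    rw [hAdjIff]
    refine ⟨⟨hne_2_3, Or.inl hc_2_3⟩, ?_⟩
    intro hq
    rw [Sym2.mk_eq_mk_iff (p := (_, _)) (q := (_, _))] at hq
    simp only [Prod.mk.injEq, Prod.swap_prod_mk] at hq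
    rcases hq with hq | hq
    · exact absurd hq.1 hne_2_4
    · exact absurd hq.1 hne_1_2.symm
  have hA_3_4 : ((cayley F).deleteEdges {s((0 : F), 1)}).Adj (a ^ 3) ((0 : F)) := by
    rw [hAdjIff]
    refine ⟨⟨hne_3_4, Or.inl hc_3_4⟩, ?_⟩
    intro hq
    rw [Sym2.mk_eq_mk_iff (p := (_, _)) (q := (_, _))] at hq
    simp only [Prod.mk.injEq, Prod.swap_prod_mk] at hq
    rcases hq with hq | hq
    · exact absurd hq.1 hne_3_4
    · exact absurd hq.1 hne_1_3.symm
  have hA_4_5 : ((cayley F).deleteEdges {s((0 : F), 1)}).Adj ((0 : F)) (a ^ 2 + a ^ 3) := by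
    rw [hAdjIff]
    refine ⟨⟨hne_4_5, Or.inl hc_4_5⟩, ?_⟩
    intro hq
    rw [Sym2.mk_eq_mk_iff (p := (_, _)) (q := (_, _))] at hq
    simp only [Prod.mk.injEq, Prod.swap_prod_mk] at hq
    rcases hq with hq | hq
    · exact absurd hq.2 hne_1_5.symm
    · exact absurd hq.2 hne_4_5.symm
  have hNA_0_2 : ¬ ((cayley F).deleteEdges {s((0 : F), 1)}).Adj (a + a ^ 2 + a ^ 3) (1 + a ^ 3) := by
    rw [hAdjIff]
    rintro ⟨⟨-, hc | hc⟩, -⟩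
    · exact hnc _ h5_0_2 hc
    · exact hnc _ h5_2_0 hc
  have hNA_0_3 : ¬ ((cayley F).deleteEdges {s((0 : F), 1)}).Adj (a + a ^ 2 + a ^ 3) (a ^ 3) := by
    rw [hAdjIff]
    rintro ⟨⟨-, hc | hc⟩, -⟩
    · exact hnc _ h5_0_3 hc
    · exact hnc _ h5_3_0 hc
  have hNA_0_4 : ¬ ((cayley F).deleteEdges {s((0 : F), 1)}).Adj (a + a ^ 2 + a ^ 3) ((0 : F)) := by
    rw [hAdjIff]
    rintro ⟨⟨-, hc | hc⟩, -⟩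
    · exact hnc _ h5_0_4 hc
    · exact hnc _ h5_4_0 hc
  have hNA_0_5 : ¬ ((cayley F).deleteEdges {s((0 : F), 1)}).Adj (a + a ^ 2 + a ^ 3) (a ^ 2 + a ^ 3) := by
    rw [hAdjIff]
    rintro ⟨⟨-, hc | hc⟩, -⟩
    · exact hnc _ h5_0_5 hc
    · exact hnc _ h5_5_0 hc
  have hNA_1_3 : ¬ ((cayley F).deleteEdges {s((0 : F), 1)}).Adj ((1 : F)) (a ^ 3) := by
    rw [hAdjIff]
    rintro ⟨⟨-, hc | hc⟩, -⟩
    · exact hnc _ h5_1_3 hc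
    · exact hnc _ h5_3_1 hc
  have hNA_1_5 : ¬ ((cayley F).deleteEdges {s((0 : F), 1)}).Adj ((1 : F)) (a ^ 2 + a ^ 3) := by
    rw [hAdjIff]
    rintro ⟨⟨-, hc | hc⟩, -⟩
    · exact hnc _ h5_1_5 hc
    · exact hnc _ h5_5_1 hc
  have hNA_2_4 : ¬ ((cayley F).deleteEdges {s((0 : F), 1)}).Adj (1 + a ^ 3) ((0 : F)) := by
    rw [hAdjIff]
    rintro ⟨⟨-, hc | hc⟩, -⟩
    · exact hnc _ h5_2_4 hc
    · exact hnc _ h5_4_2 hc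
  have hNA_2_5 : ¬ ((cayley F).deleteEdges {s((0 : F), 1)}).Adj (1 + a ^ 3) (a ^ 2 + a ^ 3) := by
    rw [hAdjIff]
    rintro ⟨⟨-, hc | hc⟩, -⟩
    · exact hnc _ h5_2_5 hc
    · exact hnc _ h5_5_2 hc
  have hNA_3_5 : ¬ ((cayley F).deleteEdges {s((0 : F), 1)}).Adj (a ^ 3) (a ^ 2 + a ^ 3) := by
    rw [hAdjIff]
    rintro ⟨⟨-, hc | hc⟩, -⟩
    · exact hnc _ h5_3_5 hc
    · exact hnc _ h5_5_3 hc
  have hNA_1_4 : ¬ ((cayley F).deleteEdges {s((0 : F), 1)}).Adj ((1 : F)) ((0 : F)) := by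
    rw [hAdjIff]
    rintro ⟨-, hq⟩
    exact hq Sym2.eq_swap
  refine ⟨?_, ?_⟩
  · intro i j hij
    fin_cases i <;> fin_cases j
    · rfl
    · exact absurd hij (hne_0_1)
    · exact absurd hij (hne_0_2)
    · exact absurd hij (hne_0_3)
    · exact absurd hij (hne_0_4)
    · exact absurd hij (hne_0_5)
    · exact absurd hij (hne_0_1.symm)
    · rfl
    · exact absurd hij (hne_1_2)
    · exact absurd hij (hne_1_3)
    · exact absurd hij (hne_1_4)
    · exact absurd hij (hne_1_5)
    · exact absurd hij (hne_0_2.symm)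
    · exact absurd hij (hne_1_2.symm)
    · rfl
    · exact absurd hij (hne_2_3)
    · exact absurd hij (hne_2_4)
    · exact absurd hij (hne_2_5)
    · exact absurd hij (hne_0_3.symm)
    · exact absurd hij (hne_1_3.symm)
    · exact absurd hij (hne_2_3.symm)
    · rfl
    · exact absurd hij (hne_3_4)
    · exact absurd hij (hne_3_5)
    · exact absurd hij (hne_0_4.symm)
    · exact absurd hij (hne_1_4.symm)
    · exact absurd hij (hne_2_4.symm)
    · exact absurd hij (hne_3_4.symm)
    · rfl
    · exact absurd hij (hne_4_5)
    · exact absurd hij (hne_0_5.symm)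
    · exact absurd hij (hne_1_5.symm)
    · exact absurd hij (hne_2_5.symm)
    · exact absurd hij (hne_3_5.symm)
    · exact absurd hij (hne_4_5.symm)
    · rfl
  · intro i j
    fin_cases i <;> fin_cases j
    · exact iff_of_false (fun h => h.ne rfl) (by decide)
    · exact iff_of_true hA_0_1 (by decide)
    · exact iff_of_false hNA_0_2 (by decide)
    · exact iff_of_false hNA_0_3 (by decide)
    · exact iff_of_false hNA_0_4 (by decide)
    · exact iff_of_false hNA_0_5 (by decide)
    · exact iff_of_true hA_0_1.symm (by decide)
    · exact iff_of_false (fun h => h.ne rfl) (by decide)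
    · exact iff_of_true hA_1_2 (by decide)
    · exact iff_of_false hNA_1_3 (by decide)
    · exact iff_of_false hNA_1_4 (by decide)
    · exact iff_of_false hNA_1_5 (by decide)
    · exact iff_of_false (fun h => hNA_0_2 h.symm) (by decide)
    · exact iff_of_true hA_1_2.symm (by decide)
    · exact iff_of_false (fun h => h.ne rfl) (by decide)
    · exact iff_of_true hA_2_3 (by decide)
    · exact iff_of_false hNA_2_4 (by decide)
    · exact iff_of_false hNA_2_5 (by decide)
    · exact iff_of_false (fun h => hNA_0_3 h.symm) (by decide)
    · exact iff_of_false (fun h => hNA_1_3 h.symm) (by decide)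
    · exact iff_of_true hA_2_3.symm (by decide)
    · exact iff_of_false (fun h => h.ne rfl) (by decide)
    · exact iff_of_true hA_3_4 (by decide)
    · exact iff_of_false hNA_3_5 (by decide)
    · exact iff_of_false (fun h => hNA_0_4 h.symm) (by decide)
    · exact iff_of_false (fun h => hNA_1_4 h.symm) (by decide)
    · exact iff_of_false (fun h => hNA_2_4 h.symm) (by decide)
    · exact iff_of_true hA_3_4.symm (by decide)
    · exact iff_of_false (fun h => h.ne rfl) (by decide)
    · exact iff_of_true hA_4_5 (by decide)
    · exact iff_of_false (fun h => hNA_0_5 h.symm) (by decide)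
    · exact iff_of_false (fun h => hNA_1_5 h.symm) (by decide)
    · exact iff_of_false (fun h => hNA_2_5 h.symm) (by decide)
    · exact iff_of_false (fun h => hNA_3_5 h.symm) (by decide)
    · exact iff_of_true hA_4_5.symm (by decide)
    · exact iff_of_false (fun h => h.ne rfl) (by decide)
end
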